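/- arXiv:2012.13839 — 5 statements merged into one kernel-verified Lean document; each statement's English description precedes it below -/
import Mathlib

section
/- Let P be a finite root system of unit vectors in ℝ^N (N ≥ 1) satisfying condition (EA), let ρ ≥ 0 and r > 0, and set 𝔅_r := the open ball of radius σ1(P)⁻¹σ2(P)(ρ + 2r) centered at the origin. Then for every point x₀ ∈ ℝ^N with x₀ ∉ 𝔅_r there exists a basis A ⊆ P of ℝ^N, depending only on P, ρ, r and x₀ (and not on Ω), such that for every set Ω ⊆ ℝ^N satisfying the reflection property (RP) with respect to P and ρ and containing 𝔅_r, one has: x + Co_r(A) ⊆ Ω^c for every x ∈ Ω^c ∩ B(x₀, r), and y − Co_r(A) ⊆ Ω for every y ∈ Ω ∩ B(x₀, r). -/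
open scoped RealInnerProductSpace
open Metric Set MeasureTheory

noncomputable section

abbrev E (N : ℕ) := EuclideanSpace ℝ (Fin N)

variable {N : ℕ}

/-- Reflection across the hyperplane `Π_p(s) = {x | x·p = s}`. -/
def reflect (p : E N) (s : ℝ) (x : E N) : E N := x - (2 * (⟪x, p⟫ - s)) • p

/-- Reflection across the hyperplane through the origin orthogonal to `p`. -/
def reflect0 (p : E N) : E N → E N := reflect p 0

/-- A finite root system of unit vectors. -/
def IsRootSystem (P : Set (E N)) : Prop :=
  P.Finite ∧ (∀ p ∈ P, ‖p‖ = 1) ∧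
  (∀ p ∈ P, {q | q ∈ P ∧ ∃ c : ℝ, q = c • p} = {p, -p}) ∧
  (∀ p ∈ P, reflect0 p '' P = P)

/-- Condition (EA): for every hyperplane through the origin (with normal `v ≠ 0`),
the part of `P` outside the hyperplane spans `ℝ^N`. -/
def CondEA (P : Set (E N)) : Prop :=
  ∀ v : E N, v ≠ 0 → Submodule.span ℝ {p | p ∈ P ∧ ⟪p, v⟫ ≠ 0} = ⊤

/-- The reflection property (RP) with respect to `P` and `ρ`. -/
def ReflProp (P : Set (E N)) (ρ : ℝ) (Ω : Set (E N)) : Prop :=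
  ∀ p ∈ P, ∀ s > ρ,
    reflect p s '' Ω ∩ {x | ⟪x, p⟫ < s} ⊆ Ω ∩ {x | ⟪x, p⟫ < s}

/-- `v` enumerates a basis of `ℝ^N` consisting of elements of `P`. -/
def BasisIn (P : Set (E N)) (v : Fin N → E N) : Prop :=
  (∀ i, v i ∈ P) ∧ LinearIndependent ℝ v ∧ Submodule.span ℝ (Set.range v) = ⊤

/-- The open cone `Co_r(A)` generated by a basis. -/
def Cone (r : ℝ) (v : Fin N → E N) : Set (E N) :=
  {x | ∃ a : Fin N → ℝ, (∀ i, 0 < a i) ∧ (∑ i, a i) < r ∧ x = ∑ i, a i • v i}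

/-- `σ₁(P)`. -/
def sigma1 (P : Set (E N)) : ℝ :=
  sInf {s | ∃ p₁ ∈ P, s = sSup {t | ∃ v : Fin N → E N, BasisIn P v ∧
    t = sInf (Set.range fun i => |⟪v i, p₁⟫|)}}

/-- `σ₂(P)`. -/
def sigma2 (P : Set (E N)) : ℝ :=
  sSup {t | ∃ x : E N, (∀ p ∈ P, |⟪p, x⟫| ≤ 1) ∧ t = ‖x‖}

/-- `σ₃(P)`. -/
def sigma3 (P : Set (E N)) : ℝ :=
  sInf {s | ∃ v : Fin N → E N, BasisIn P v ∧
    s = sSup {r | 0 < r ∧ ball ((1 / (2 * (N : ℝ))) • ∑ i, v i) r ⊆ Cone 1 v}}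

/-!
Let `p₁ ∈ P` maximise `g := ⟪p₁, x₀⟫`; since `P = -P` spans, `‖x₀‖ ≤ σ₂ g`, so `ρ + 2r ≤ σ₁ g`
as `x₀ ∉ 𝔅_r`. Take the basis `v ⊆ P` maximising `∑ ⟪vᵢ, x₀⟫`. Exchanging `vᵢ` for any `p ∈ P`
with nonzero `i`-th coordinate keeps a basis, so `|⟪p, x₀⟫| ≤ ⟪vᵢ, x₀⟫` for such `p`. If `p₁`
itself is such a `p`, then `⟪vᵢ, x₀⟫ ≥ g ≥ σ₁ g`. Otherwise the `i`-th coordinate of `p₁`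
vanishes, so an element `u` with nonzero `i`-th coordinate of a basis realising `σ₁` for `p₁` and
its reflection `u - 2⟪u, p₁⟫ p₁` are both such `p`; their inner products with `x₀` differ by
`2⟪u, p₁⟫ g`, so again `⟪vᵢ, x₀⟫ ≥ σ₁ g`. Hence `⟪·, vᵢ⟫ > ρ + r` on `B(x₀, r)`.

Reflecting across `Π_p(⟪x, p⟫ + t/2)` exchanges `x` and `x + t p`, so (RP) forbids `x ∉ Ω`,
`x + t p ∈ Ω` whenever `⟪x, p⟫ > ρ`. Moving along the `vᵢ` one at a time, a cone step of total
length `< r` never leaves the half-spaces `⟪·, vᵢ⟫ > ρ`, which gives both inclusions.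
-/

open Module

section InnerProductSpace

variable {F : Type*} [NormedAddCommGroup F] [InnerProductSpace ℝ F]

lemma eq_zero_of_forall_inner_eq_zero {S : Set F} (hS : Submodule.span ℝ S = ⊤) {x : F}
    (h : ∀ p ∈ S, ⟪p, x⟫ = 0) : x = 0 := by
  have hx : innerₛₗ ℝ x = 0 :=
    LinearMap.ext_on hS fun p hp => by simpa using (real_inner_comm p x).trans (h p hp)
  simpa using congr($hx x)

lemma bddAbove_norm_of_abs_inner_le_one {S : Set F} (hS : S.Finite)
    (hspan : Submodule.span ℝ S = ⊤) [FiniteDimensional ℝ F] :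
    BddAbove {t | ∃ x : F, (∀ p ∈ S, |⟪p, x⟫| ≤ 1) ∧ t = ‖x‖} := by
  have := hS.fintype
  let f : F →ₗ[ℝ] S → ℝ := LinearMap.pi fun p => innerₛₗ ℝ (p : F)
  obtain ⟨K, -, hK⟩ := f.exists_antilipschitzWith <| LinearMap.ker_eq_bot'.mpr fun x hx =>
    eq_zero_of_forall_inner_eq_zero hspan fun p hp => congr_fun hx ⟨p, hp⟩
  refine ⟨K, ?_⟩
  rintro t ⟨x, hx, rfl⟩
  have hfx : ‖f x‖ ≤ 1 := (pi_norm_le_iff_of_nonneg zero_le_one).mpr fun p => hx p p.2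
  simpa using (ZeroHomClass.bound_of_antilipschitz f hK x).trans
    (mul_le_of_le_one_right K.2 hfx)

lemma abs_inner_sum_smul_le {ι : Type*} {s : Finset ι} {v : ι → F} (hv : ∀ i, ‖v i‖ = 1)
    {a : ι → ℝ} (ha : ∀ i, 0 ≤ a i) {p : F} (hp : ‖p‖ = 1) :
    |⟪∑ j ∈ s, a j • v j, p⟫| ≤ ∑ j ∈ s, a j :=
  calc |⟪∑ j ∈ s, a j • v j, p⟫| ≤ ‖∑ j ∈ s, a j • v j‖ := by
        simpa [hp] using abs_real_inner_le_norm (∑ j ∈ s, a j • v j) p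
    _ ≤ ∑ j ∈ s, ‖a j • v j‖ := norm_sum_le _ _
    _ = ∑ j ∈ s, a j := by simp [norm_smul, hv, abs_of_nonneg (ha _)]

lemma sub_lt_inner_of_mem_ball {p x x₀ : F} {r : ℝ} (hp : ‖p‖ = 1) (hx : x ∈ ball x₀ r) :
    ⟪x₀, p⟫ - r < ⟪x, p⟫ := by
  have h := abs_real_inner_le_norm (x - x₀) p
  rw [hp, mul_one, inner_sub_left] at h
  linarith [(abs_le.mp h).1, mem_ball_iff_norm.mp hx]

end InnerProductSpace

lemma Module.Basis.linearIndependent_update {ι K V : Type*} [DecidableEq ι] [Field K]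
    [AddCommGroup V] [Module K V] (b : Basis ι K V) {i : ι} {m : V} (hm : b.repr m i ≠ 0) :
    LinearIndependent K (Function.update b i m) :=
  b.linearIndependent.update i m
    ⟨1, one_mem _, b.repr m, mem_nonZeroDivisors_of_ne_zero hm, by simp⟩

lemma Module.Basis.exists_repr_ne_zero {ι κ K V : Type*} [Field K] [AddCommGroup V]
    [Module K V] (b : Basis ι K V) (i : ι) {u : κ → V}
    (hu : Submodule.span K (range u) = ⊤) : ∃ k, b.repr (u k) i ≠ 0 := by
  by_contra! h
  have hi : b.coord i = 0 := LinearMap.ext_on_range hu fun k => by simpa using h k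
  simpa using congr($hi (b i))

section Bases

variable {P S : Set (E N)}

lemma BasisIn.mono {v : Fin N → E N} (hv : BasisIn S v) (hSP : S ⊆ P) : BasisIn P v :=
  ⟨fun i => hSP (hv.1 i), hv.2⟩

def BasisIn.toBasis {v : Fin N → E N} (hv : BasisIn P v) : Basis (Fin N) ℝ (E N) :=
  Basis.mk hv.2.1 hv.2.2.ge

@[simp]
lemma BasisIn.coe_toBasis {v : Fin N → E N} (hv : BasisIn P v) : ⇑hv.toBasis = v :=
  Basis.coe_mk _ _

lemma exists_basisIn (hS : Submodule.span ℝ S = ⊤) : ∃ v : Fin N → E N, BasisIn S v := by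
  let b := Basis.ofSpan hS.ge
  let b' := b.reindex (b.indexEquiv (EuclideanSpace.basisFun (Fin N) ℝ).toBasis)
  refine ⟨b', fun i => ?_, b'.linearIndependent, b'.span_eq⟩
  exact Basis.ofSpan_subset hS.ge (by simp [b', b])

lemma finite_setOf_basisIn (hP : P.Finite) : {v : Fin N → E N | BasisIn P v}.Finite :=
  (Set.Finite.pi' fun _ => hP).subset fun _ hv => hv.1

lemma BasisIn.update {v : Fin N → E N} (hv : BasisIn P v) {i : Fin N} {p : E N} (hp : p ∈ P)
    (hpi : hv.toBasis.repr p i ≠ 0) : BasisIn P (Function.update v i p) := by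
  have hind : LinearIndependent ℝ (Function.update v i p) := by
    simpa using hv.toBasis.linearIndependent_update hpi
  refine ⟨fun j => ?_, hind, hind.span_eq_top_of_card_eq_finrank' (by simp)⟩
  rcases eq_or_ne j i with rfl | hj
  · simpa using hp
  · simpa [hj] using hv.1 j

end Bases

section RootSystem

variable {P : Set (E N)}

lemma IsRootSystem.neg_mem (hP : IsRootSystem P) {p : E N} (hp : p ∈ P) : -p ∈ P := by
  have h : -p ∈ ({p, -p} : Set (E N)) := by simp
  rw [← hP.2.2.1 p hp] at h
  exact h.1

lemma IsRootSystem.sub_smul_mem (hP : IsRootSystem P) {p q : E N} (hp : p ∈ P) (hq : q ∈ P) :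
    q - (2 * ⟪q, p⟫) • p ∈ P := by
  have h : reflect0 p q ∈ reflect0 p '' P := mem_image_of_mem _ hq
  rw [hP.2.2.2 p hp] at h
  simpa [reflect0, reflect] using h

lemma IsRootSystem.abs_inner_le (hP : IsRootSystem P) {x p₁ : E N}
    (hmax : ∀ p ∈ P, ⟪p, x⟫ ≤ ⟪p₁, x⟫) {p : E N} (hp : p ∈ P) : |⟪p, x⟫| ≤ ⟪p₁, x⟫ :=
  abs_le.mpr ⟨by linarith [inner_neg_left (𝕜 := ℝ) p x, hmax _ (hP.neg_mem hp)], hmax p hp⟩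

lemma CondEA.span_eq_top [Nontrivial (E N)] (hEA : CondEA P) : Submodule.span ℝ P = ⊤ := by
  obtain ⟨v, hv⟩ := exists_ne (0 : E N)
  exact top_le_iff.mp <| (hEA v hv).ge.trans (Submodule.span_mono fun p hp => hp.1)

lemma nonempty_of_span_eq_top [Nontrivial (E N)] (hspan : Submodule.span ℝ P = ⊤) :
    P.Nonempty :=
  nonempty_iff_ne_empty.mpr fun h =>
    bot_ne_top (α := Submodule ℝ (E N)) (by rw [← hspan, h, Submodule.span_empty])

end RootSystem

section Sigma1

variable {P : Set (E N)}

def minAbsInners (P : Set (E N)) (p₁ : E N) : Set ℝ :=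
  {t | ∃ v : Fin N → E N, BasisIn P v ∧ t = sInf (range fun i => |⟪v i, p₁⟫|)}

lemma finite_minAbsInners (hP : P.Finite) (p₁ : E N) : (minAbsInners P p₁).Finite :=
  ((finite_setOf_basisIn hP).image _).subset fun _ ⟨v, hv, ht⟩ => ⟨v, hv, ht.symm⟩

lemma finite_setOf_sSup_minAbsInners (hP : P.Finite) :
    {s | ∃ p₁ ∈ P, s = sSup (minAbsInners P p₁)}.Finite :=
  (hP.image _).subset <| by rintro _ ⟨p₁, hp₁, rfl⟩; exact mem_image_of_mem _ hp₁

lemma sigma1_le_sSup_minAbsInners (hP : P.Finite) {p₁ : E N} (hp₁ : p₁ ∈ P) :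
    sigma1 P ≤ sSup (minAbsInners P p₁) :=
  csInf_le (finite_setOf_sSup_minAbsInners hP).bddBelow ⟨p₁, hp₁, rfl⟩

lemma exists_sigma1_eq [Nontrivial (E N)] (hP : P.Finite) (hspan : Submodule.span ℝ P = ⊤) :
    ∃ p₁ ∈ P, sigma1 P = sSup (minAbsInners P p₁) :=
  Set.Nonempty.csInf_mem (((nonempty_of_span_eq_top hspan).image _).mono <| by
    rintro _ ⟨p₁, hp₁, rfl⟩; exact ⟨p₁, hp₁, rfl⟩) (finite_setOf_sSup_minAbsInners hP)

lemma exists_basisIn_sigma1_le_abs_inner (hP : P.Finite) (hspan : Submodule.span ℝ P = ⊤)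
    {p₁ : E N} (hp₁ : p₁ ∈ P) :
    ∃ u : Fin N → E N, BasisIn P u ∧ ∀ i, sigma1 P ≤ |⟪u i, p₁⟫| := by
  obtain ⟨v, hv⟩ := exists_basisIn hspan
  obtain ⟨u, hu, hsup⟩ : sSup (minAbsInners P p₁) ∈ minAbsInners P p₁ :=
    Set.Nonempty.csSup_mem ⟨_, v, hv, rfl⟩ (finite_minAbsInners hP p₁)
  refine ⟨u, hu, fun i => (sigma1_le_sSup_minAbsInners hP hp₁).trans ?_⟩
  exact hsup.le.trans (csInf_le (finite_range _).bddBelow ⟨i, rfl⟩)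

lemma sigma1_le_one [NeZero N] (hP : IsRootSystem P) (hspan : Submodule.span ℝ P = ⊤) :
    sigma1 P ≤ 1 := by
  obtain ⟨p₀, hp₀⟩ := nonempty_of_span_eq_top hspan
  obtain ⟨u, hu, hσ⟩ := exists_basisIn_sigma1_le_abs_inner hP.1 hspan hp₀
  have h := abs_real_inner_le_norm (u 0) p₀
  rw [hP.2.1 _ (hu.1 0), hP.2.1 _ hp₀, one_mul] at h
  exact (hσ 0).trans h

lemma sigma1_pos [NeZero N] (hP : IsRootSystem P) (hEA : CondEA P) : 0 < sigma1 P := by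
  obtain ⟨p₁, hp₁, hσ⟩ := exists_sigma1_eq hP.1 hEA.span_eq_top
  have hp₁0 : p₁ ≠ 0 := norm_ne_zero_iff.mp (by simp [hP.2.1 p₁ hp₁])
  obtain ⟨u, hu⟩ := exists_basisIn (hEA p₁ hp₁0)
  obtain ⟨i, hi⟩ := (range_nonempty fun i => |⟪u i, p₁⟫|).csInf_mem (finite_range _)
  calc 0 < |⟪u i, p₁⟫| := abs_pos.mpr (hu.1 i).2
    _ = sInf (range fun i => |⟪u i, p₁⟫|) := hi
    _ ≤ sSup (minAbsInners P p₁) :=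
      le_csSup (finite_minAbsInners hP.1 p₁).bddAbove ⟨u, hu.mono fun _ hp => hp.1, rfl⟩
    _ = sigma1 P := hσ.symm

end Sigma1

section Sigma2

variable {P : Set (E N)}

lemma norm_le_sigma2 (hP : P.Finite) (hspan : Submodule.span ℝ P = ⊤) {x : E N}
    (hx : ∀ p ∈ P, |⟪p, x⟫| ≤ 1) : ‖x‖ ≤ sigma2 P :=
  le_csSup (bddAbove_norm_of_abs_inner_le_one hP hspan) ⟨x, hx, rfl⟩

lemma one_le_sigma2 [Nontrivial (E N)] (hP : IsRootSystem P) (hspan : Submodule.span ℝ P = ⊤) :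
    1 ≤ sigma2 P := by
  obtain ⟨p₀, hp₀⟩ := nonempty_of_span_eq_top hspan
  refine hP.2.1 p₀ hp₀ ▸ norm_le_sigma2 hP.1 hspan fun p hp => ?_
  simpa [hP.2.1 p hp, hP.2.1 p₀ hp₀] using abs_real_inner_le_norm p p₀

lemma norm_le_sigma2_mul (hP : P.Finite) (hspan : Submodule.span ℝ P = ⊤) {x : E N} {g : ℝ}
    (hg : 0 ≤ g) (hx : ∀ p ∈ P, |⟪p, x⟫| ≤ g) : ‖x‖ ≤ sigma2 P * g := by
  rcases hg.eq_or_lt with rfl | hg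
  · have hx0 : x = 0 :=
      eq_zero_of_forall_inner_eq_zero hspan fun p hp => abs_nonpos_iff.mp (hx p hp)
    simp [hx0]
  have h : ‖g⁻¹ • x‖ ≤ sigma2 P := norm_le_sigma2 hP hspan fun p hp => by
    rw [inner_smul_right, abs_mul, abs_inv, abs_of_pos hg]
    exact inv_mul_le_one_of_le₀ (hx p hp) hg.le
  rwa [norm_smul, Real.norm_of_nonneg (inv_nonneg.mpr hg.le), inv_mul_le_iff₀ hg, mul_comm] at h

end Sigma2

section Exchange

variable {P : Set (E N)} {x₀ : E N} {v : Fin N → E N}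

lemma abs_inner_le_of_isMax (hP : IsRootSystem P) (hv : BasisIn P v)
    (hvmax : ∀ w, BasisIn P w → ∑ j, ⟪w j, x₀⟫ ≤ ∑ j, ⟪v j, x₀⟫) {i : Fin N} {p : E N}
    (hp : p ∈ P) (hpi : hv.toBasis.repr p i ≠ 0) : |⟪p, x₀⟫| ≤ ⟪v i, x₀⟫ := by
  have hle : ∀ p ∈ P, hv.toBasis.repr p i ≠ 0 → ⟪p, x₀⟫ ≤ ⟪v i, x₀⟫ := fun p hp hpi => by
    have h := hvmax _ (hv.update hp hpi)
    simp only [Function.apply_update (fun _ y => ⟪y, x₀⟫)] at h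
    rw [Finset.sum_update_of_mem (Finset.mem_univ i),
      Finset.sum_eq_add_sum_sdiff_singleton_of_mem (Finset.mem_univ i)] at h
    linarith
  refine abs_le.mpr ⟨?_, hle p hp hpi⟩
  have := hle (-p) (hP.neg_mem hp) (by simpa using hpi)
  rw [inner_neg_left] at this
  linarith

lemma sigma1_mul_le_inner_of_isMax [NeZero N] (hP : IsRootSystem P)
    (hspan : Submodule.span ℝ P = ⊤) {p₁ : E N} (hp₁ : p₁ ∈ P)
    (hmax : ∀ p ∈ P, ⟪p, x₀⟫ ≤ ⟪p₁, x₀⟫) (hv : BasisIn P v)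
    (hvmax : ∀ w, BasisIn P w → ∑ j, ⟪w j, x₀⟫ ≤ ∑ j, ⟪v j, x₀⟫) (i : Fin N) :
    sigma1 P * ⟪p₁, x₀⟫ ≤ ⟪v i, x₀⟫ := by
  set g := ⟪p₁, x₀⟫
  have hg : 0 ≤ g := (abs_nonneg _).trans (hP.abs_inner_le hmax hp₁)
  have hexch := fun p (hp : p ∈ P) hpi => abs_inner_le_of_isMax hP hv hvmax (i := i) hp hpi
  by_cases hp₁i : hv.toBasis.repr p₁ i = 0
  · obtain ⟨u, hu, hσ⟩ := exists_basisIn_sigma1_le_abs_inner hP.1 hspan hp₁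
    obtain ⟨k, hk⟩ := hv.toBasis.exists_repr_ne_zero i hu.2.2
    set q := u k - (2 * ⟪u k, p₁⟫) • p₁
    have hqi : hv.toBasis.repr q i ≠ 0 := by simpa [q, hp₁i] using hk
    have hq : ⟪q, x₀⟫ = ⟪u k, x₀⟫ - 2 * (⟪u k, p₁⟫ * g) := by
      simp only [q, inner_sub_left, real_inner_smul_left]
      ring
    have h₁ := abs_le.mp (hexch _ (hu.1 k) hk)
    have h₂ := abs_le.mp (hexch _ (hP.sub_smul_mem hp₁ (hu.1 k)) hqi)
    calc sigma1 P * g ≤ |⟪u k, p₁⟫| * g := mul_le_mul_of_nonneg_right (hσ k) hg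
      _ = |⟪u k, p₁⟫ * g| := by rw [abs_mul, abs_of_nonneg hg]
      _ ≤ ⟪v i, x₀⟫ := abs_le.mpr ⟨by linarith, by linarith⟩
  · calc sigma1 P * g ≤ g := mul_le_of_le_one_left hg (sigma1_le_one hP hspan)
      _ ≤ |g| := le_abs_self g
      _ ≤ ⟪v i, x₀⟫ := hexch p₁ hp₁ hp₁i

lemma exists_basisIn_le_inner [NeZero N] (hP : IsRootSystem P) (hEA : CondEA P) {c : ℝ}
    (hx₀ : (sigma1 P)⁻¹ * sigma2 P * c ≤ ‖x₀‖) :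
    ∃ v : Fin N → E N, BasisIn P v ∧ ∀ i, c ≤ ⟪v i, x₀⟫ := by
  have hspan := hEA.span_eq_top
  obtain ⟨p₁, hp₁, hmax⟩ :=
    Set.exists_max_image P (fun p => ⟪p, x₀⟫) hP.1 (nonempty_of_span_eq_top hspan)
  obtain ⟨v, hv, hvmax⟩ := Set.exists_max_image _ (fun w => ∑ j, ⟪w j, x₀⟫)
    (finite_setOf_basisIn hP.1) (exists_basisIn hspan)
  have hg : 0 ≤ ⟪p₁, x₀⟫ := (abs_nonneg _).trans (hP.abs_inner_le hmax hp₁)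
  have hnorm := norm_le_sigma2_mul hP.1 hspan hg fun p hp => hP.abs_inner_le hmax hp
  have hc : c ≤ sigma1 P * ⟪p₁, x₀⟫ := by
    rw [← inv_mul_le_iff₀ (sigma1_pos hP hEA)]
    refine le_of_mul_le_mul_left ?_ (one_pos.trans_le (one_le_sigma2 hP hspan))
    linarith
  exact ⟨v, hv, fun i => hc.trans (sigma1_mul_le_inner_of_isMax hP hspan hp₁ hmax hv hvmax i)⟩

end Exchange

namespace ReflProp

variable {P : Set (E N)} {ρ : ℝ} {Ω : Set (E N)}

lemma add_smul_notMem (hΩ : ReflProp P ρ Ω) {p x : E N} (hp : p ∈ P) (hp1 : ‖p‖ = 1)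
    (hx : x ∉ Ω) (hxp : ρ < ⟪x, p⟫) {t : ℝ} (ht : 0 < t) : x + t • p ∉ Ω := by
  intro hxt
  have hrefl : reflect p (⟪x, p⟫ + t / 2) (x + t • p) = x := by
    rw [reflect, inner_add_left, real_inner_smul_left, inner_self_eq_one_of_norm_eq_one hp1,
      show 2 * (⟪x, p⟫ + t * 1 - (⟪x, p⟫ + t / 2)) = t by ring, add_sub_cancel_right]
  refine hx (hΩ p hp _ (by linarith) ⟨⟨_, hxt, hrefl⟩, ?_⟩).1
  show ⟪x, p⟫ < ⟪x, p⟫ + t / 2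
  linarith

lemma sub_smul_mem (hΩ : ReflProp P ρ Ω) {p y : E N} (hp : p ∈ P) (hp1 : ‖p‖ = 1)
    (hy : y ∈ Ω) {t : ℝ} (ht : 0 < t) (hyp : ρ + t < ⟪y, p⟫) : y - t • p ∈ Ω := by
  by_contra h
  refine hΩ.add_smul_notMem hp hp1 h ?_ ht (by rwa [sub_add_cancel])
  rw [inner_sub_left, real_inner_smul_left, inner_self_eq_one_of_norm_eq_one hp1]
  linarith

variable {ι : Type*} {v : ι → E N} {a : ι → ℝ} {c : ℝ}

lemma add_sum_smul_notMem (hΩ : ReflProp P ρ Ω) (hv : ∀ i, v i ∈ P) (hv1 : ∀ i, ‖v i‖ = 1)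
    (ha : ∀ i, 0 < a i) {x : E N} (hx : x ∉ Ω) (hxv : ∀ i, ρ + c < ⟪x, v i⟫) (s : Finset ι)
    (hs : ∑ j ∈ s, a j ≤ c) : x + ∑ j ∈ s, a j • v j ∉ Ω := by
  classical
  induction s using Finset.induction_on with
  | empty => simpa using hx
  | insert j s hj ih =>
    rw [Finset.sum_insert hj] at hs ⊢
    have hbound :=
      (abs_le.mp <| abs_inner_sum_smul_le (s := s) hv1 (fun i => (ha i).le) (hv1 j)).1
    rw [← add_assoc, add_right_comm]
    refine hΩ.add_smul_notMem (hv j) (hv1 j) (ih (by linarith [ha j])) ?_ (ha j)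
    rw [inner_add_left]
    linarith [hxv j, ha j]

lemma sub_sum_smul_mem (hΩ : ReflProp P ρ Ω) (hv : ∀ i, v i ∈ P) (hv1 : ∀ i, ‖v i‖ = 1)
    (ha : ∀ i, 0 < a i) {y : E N} (hy : y ∈ Ω) (hyv : ∀ i, ρ + c < ⟪y, v i⟫) (s : Finset ι)
    (hs : ∑ j ∈ s, a j ≤ c) : y - ∑ j ∈ s, a j • v j ∈ Ω := by
  classical
  induction s using Finset.induction_on with
  | empty => simpa using hy
  | insert j s hj ih =>
    rw [Finset.sum_insert hj] at hs ⊢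
    have hbound :=
      (abs_le.mp <| abs_inner_sum_smul_le (s := s) hv1 (fun i => (ha i).le) (hv1 j)).2
    rw [add_comm, ← sub_sub]
    refine hΩ.sub_smul_mem (hv j) (hv1 j) (ih (by linarith [ha j])) (ha j) ?_
    rw [inner_sub_left]
    linarith [hyv j]

end ReflProp

theorem cone_property_general (N : ℕ) (hN : 1 ≤ N) (P : Set (E N))
    (hP : IsRootSystem P) (hEA : CondEA P) (ρ r : ℝ)
    (x₀ : E N) (hx₀ : x₀ ∉ ball (0 : E N) ((sigma1 P)⁻¹ * sigma2 P * (ρ + 2 * r))) :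
    ∃ v : Fin N → E N, BasisIn P v ∧
      ∀ Ω : Set (E N), ReflProp P ρ Ω →
        ball (0 : E N) ((sigma1 P)⁻¹ * sigma2 P * (ρ + 2 * r)) ⊆ Ω →
        (∀ x ∈ Ωᶜ ∩ ball x₀ r, ∀ z ∈ Cone r v, x + z ∈ Ωᶜ) ∧
        (∀ y ∈ Ω ∩ ball x₀ r, ∀ z ∈ Cone r v, y - z ∈ Ω) := by
  have : NeZero N := ⟨by omega⟩
  obtain ⟨v, hv, hvx₀⟩ := exists_basisIn_le_inner hP hEA (by simpa using hx₀)
  have hv1 : ∀ i, ‖v i‖ = 1 := fun i => hP.2.1 _ (hv.1 i)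
  have hball : ∀ x ∈ ball x₀ r, ∀ i, ρ + r < ⟪x, v i⟫ := fun x hx i => by
    linarith [hvx₀ i, real_inner_comm x₀ (v i), sub_lt_inner_of_mem_ball (hv1 i) hx]
  refine ⟨v, hv, fun Ω hΩ _ => ⟨?_, ?_⟩⟩
  · rintro x ⟨hx, hxr⟩ _ ⟨a, ha, har, rfl⟩
    exact hΩ.add_sum_smul_notMem hv.1 hv1 ha hx (hball x hxr) _ har.le
  · rintro y ⟨hy, hyr⟩ _ ⟨a, ha, har, rfl⟩
    exact hΩ.sub_sum_smul_mem hv.1 hv1 ha hy (hball y hyr) _ har.le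

/-- cone property at points outside `𝔅_r`, with cone directions
depending only on `P`, `ρ`, `r` and `x₀` (and not on `Ω`). -/
theorem cone_property (N : ℕ) (hN : 1 ≤ N) (P : Set (E N))
    (hP : IsRootSystem P) (hEA : CondEA P) (ρ r : ℝ) (hρ : 0 ≤ ρ) (hr : 0 < r)
    (x₀ : E N) (hx₀ : x₀ ∉ ball (0 : E N) ((sigma1 P)⁻¹ * sigma2 P * (ρ + 2 * r))) :
    ∃ v : Fin N → E N, BasisIn P v ∧
      ∀ Ω : Set (E N), ReflProp P ρ Ω →
        ball (0 : E N) ((sigma1 P)⁻¹ * sigma2 P * (ρ + 2 * r)) ⊆ Ω →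
        (∀ x ∈ Ωᶜ ∩ ball x₀ r, ∀ z ∈ Cone r v, x + z ∈ Ωᶜ) ∧
        (∀ y ∈ Ω ∩ ball x₀ r, ∀ z ∈ Cone r v, y - z ∈ Ω) :=
  cone_property_general N hN P hP hEA ρ r x₀ hx₀
end
end

section
/- Let P be a finite root system of unit vectors in ℝ^N, let ρ ≥ 0, and let Ω ⊆ ℝ^N satisfy the reflection property (RP) with respect to P and ρ. If p ∈ P, y ∈ ℝ^N satisfies y·p > ρ, a > 0, and y + a·p ∈ Ω, then y ∈ Ω. -/
open scoped RealInnerProductSpace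
open Metric Set MeasureTheory

noncomputable section

variable {N : ℕ}

/-- if `y·p > ρ` and `y + a p ∈ Ω` for some `a > 0`, then `y ∈ Ω`. -/
theorem mem_of_translate_mem (N : ℕ) (P : Set (E N)) (hP : IsRootSystem P)
    (ρ : ℝ) (hρ : 0 ≤ ρ) (Ω : Set (E N)) (hΩ : ReflProp P ρ Ω)
    (p : E N) (hp : p ∈ P) (y : E N) (hy : ⟪y, p⟫ > ρ)
    (a : ℝ) (ha : 0 < a) (hmem : y + a • p ∈ Ω) :
    y ∈ Ω := by
  obtain ⟨-, hunit, -, -⟩ := hP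
  have hpp : ⟪p, p⟫ = 1 := by
    rw [real_inner_self_eq_norm_sq, hunit p hp]; norm_num
  set s : ℝ := ⟪y, p⟫ + a / 2 with hs
  have hsρ : s > ρ := by simp only [hs]; linarith
  have key := hΩ p hp s hsρ
  have hrefl : reflect p s (y + a • p) = y := by
    simp only [reflect, inner_add_left, real_inner_smul_left, hpp, hs]
    rw [show (2 * (⟪y, p⟫ + a * 1 - (⟪y, p⟫ + a / 2))) = a by ring]
    abel
  have : y ∈ reflect p s '' Ω ∩ {x | ⟪x, p⟫ < s} := by
    refine ⟨⟨y + a • p, hmem, hrefl⟩, ?_⟩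
    simp only [Set.mem_setOf_eq, hs]; linarith
  exact (key this).1
end
end

section
/- Let P be a finite root system of unit vectors in ℝ^N, let ρ ≥ 0, and let Ω ⊆ ℝ^N satisfy the reflection property (RP) with respect to P and ρ. Let A ⊆ P be a basis of ℝ^N, let r > 0, and suppose x ∈ ℝ^N satisfies p·x ≥ ρ + r for all p ∈ A. Then: if x ∈ Ω^c, then x + Co_r(A) ⊆ Ω^c; and if x ∈ Ω, then x − Co_r(A) ⊆ Ω. -/
open scoped RealInnerProductSpace
open Metric Set MeasureTheory

noncomputable section

variable {N : ℕ}

lemma inner_sub_smul_self {p : E N} (hpn : ‖p‖ = 1) (x : E N) (a : ℝ) :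
    ⟪x - a • p, p⟫ = ⟪x, p⟫ - a := by
  rw [inner_sub_left, real_inner_smul_left, real_inner_self_eq_norm_sq, hpn]
  ring

lemma reflect_sub {p : E N} (hpn : ‖p‖ = 1) (x : E N) (a : ℝ) :
    reflect p (⟪x, p⟫ - a / 2) x = x - a • p := by
  have h : 2 * (⟪x, p⟫ - (⟪x, p⟫ - a / 2)) = a := by ring
  rw [reflect, h]

lemma interior_step {P : Set (E N)} {ρ : ℝ} {Ω : Set (E N)} (hΩ : ReflProp P ρ Ω)
    {p : E N} (hp : p ∈ P) (hpn : ‖p‖ = 1) {a : ℝ} (ha : 0 < a)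
    {x : E N} (hxΩ : x ∈ Ω) (hs : ρ < ⟪x, p⟫ - a / 2) :
    x - a • p ∈ Ω := by
  refine (hΩ p hp (⟪x, p⟫ - a / 2) hs ⟨⟨x, hxΩ, reflect_sub hpn x a⟩, ?_⟩).1
  show ⟪x - a • p, p⟫ < ⟪x, p⟫ - a / 2
  rw [inner_sub_smul_self hpn]
  linarith

lemma exterior_step {P : Set (E N)} {ρ : ℝ} {Ω : Set (E N)} (hΩ : ReflProp P ρ Ω)
    {p : E N} (hp : p ∈ P) (hpn : ‖p‖ = 1) {a : ℝ} (ha : 0 < a)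
    {x : E N} (hxΩ : x ∉ Ω) (hs : ρ < ⟪x, p⟫ + a / 2) :
    x + a • p ∉ Ω := by
  intro h
  have heq : reflect p (⟪x, p⟫ + a / 2) (x + a • p) = x := by
    have h1 : ⟪x + a • p, p⟫ = ⟪x, p⟫ + a := by
      rw [inner_add_left, real_inner_smul_left, real_inner_self_eq_norm_sq, hpn]; ring
    rw [reflect, h1]
    have : 2 * (⟪x, p⟫ + a - (⟪x, p⟫ + a / 2)) = a := by ring
    rw [this]; abel
  have hlt : ⟪x, p⟫ < ⟪x, p⟫ + a / 2 := by linarith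
  exact hxΩ (hΩ p hp (⟪x, p⟫ + a / 2) hs ⟨⟨x + a • p, h, heq⟩, hlt⟩).1

/-- interior and exterior cones at points deep in the half-spaces. -/
theorem cone_inclusion (N : ℕ) (P : Set (E N)) (hP : IsRootSystem P)
    (ρ : ℝ) (hρ : 0 ≤ ρ) (Ω : Set (E N)) (hΩ : ReflProp P ρ Ω)
    (v : Fin N → E N) (hv : BasisIn P v) (r : ℝ) (hr : 0 < r)
    (x : E N) (hx : ∀ i, ⟪v i, x⟫ ≥ ρ + r) :
    (x ∈ Ωᶜ → ∀ z ∈ Cone r v, x + z ∈ Ωᶜ) ∧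
    (x ∈ Ω → ∀ z ∈ Cone r v, x - z ∈ Ω) := by
  obtain ⟨-, hPnorm, -, -⟩ := hP
  obtain ⟨hvP, -, -⟩ := hv
  have hvn : ∀ i, ‖v i‖ = 1 := fun i => hPnorm _ (hvP i)
  have habs : ∀ (a : Fin N → ℝ), (∀ i, 0 < a i) → ∀ (t : Finset (Fin N)) (j : Fin N),
      |⟪∑ i ∈ t, a i • v i, v j⟫| ≤ ∑ i ∈ t, a i := by
    intro a hapos t j
    rw [sum_inner]
    refine (Finset.abs_sum_le_sum_abs _ _).trans (Finset.sum_le_sum fun i _ => ?_)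
    rw [real_inner_smul_left, abs_mul, abs_of_pos (hapos i)]
    calc a i * |⟪v i, v j⟫| ≤ a i * (‖v i‖ * ‖v j‖) := by
          exact mul_le_mul_of_nonneg_left (abs_real_inner_le_norm _ _) (hapos i).le
      _ = a i := by rw [hvn i, hvn j]; ring
  constructor
  · -- exterior
    intro hxΩ z hz
    obtain ⟨a, hapos, hasum, rfl⟩ := hz
    have hsub : ∀ t : Finset (Fin N), ∑ i ∈ t, a i ≤ ∑ i, a i :=
      fun t => Finset.sum_le_univ_sum_of_nonneg fun i => (hapos i).le
    have key : ∀ t : Finset (Fin N), x + ∑ i ∈ t, a i • v i ∈ Ωᶜ := by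
      intro t
      induction t using Finset.induction_on with
      | empty => simpa using hxΩ
      | @insert j t hj ih =>
        rw [Finset.sum_insert hj]
        have hy : x + (a j • v j + ∑ i ∈ t, a i • v i)
            = (x + ∑ i ∈ t, a i • v i) + a j • v j := by abel
        rw [hy]
        refine exterior_step hΩ (hvP j) (hvn j) (hapos j) ih ?_
        have h1 : ⟪x + ∑ i ∈ t, a i • v i, v j⟫
            = ⟪v j, x⟫ + ⟪∑ i ∈ t, a i • v i, v j⟫ := by
          rw [inner_add_left, real_inner_comm x (v j)]
        have h2 := (abs_le.mp (habs a hapos t j)).1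
        have h3 := hx j
        have h4 := hsub t
        rw [h1]
        linarith [hapos j]
    simpa using key Finset.univ
  · -- interior
    intro hxΩ z hz
    obtain ⟨a, hapos, hasum, rfl⟩ := hz
    have hsub : ∀ t : Finset (Fin N), ∑ i ∈ t, a i ≤ ∑ i, a i :=
      fun t => Finset.sum_le_univ_sum_of_nonneg fun i => (hapos i).le
    have key : ∀ t : Finset (Fin N), x - ∑ i ∈ t, a i • v i ∈ Ω := by
      intro t
      induction t using Finset.induction_on with
      | empty => simpa using hxΩ
      | @insert j t hj ih =>
        rw [Finset.sum_insert hj]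
        have hy : x - (a j • v j + ∑ i ∈ t, a i • v i)
            = (x - ∑ i ∈ t, a i • v i) - a j • v j := by abel
        rw [hy]
        refine interior_step hΩ (hvP j) (hvn j) (hapos j) ih ?_
        have h1 : ⟪x - ∑ i ∈ t, a i • v i, v j⟫
            = ⟪v j, x⟫ - ⟪∑ i ∈ t, a i • v i, v j⟫ := by
          rw [inner_sub_left, real_inner_comm x (v j)]
        have h2 := (abs_le.mp (habs a hapos t j)).2
        have h3 := hx j
        have h5 : ∑ i ∈ insert j t, a i ≤ ∑ i, a i := hsub _
        rw [Finset.sum_insert hj] at h5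
        rw [h1]
        linarith [hapos j]
    simpa using key Finset.univ
end
end

section
/- Let P be a finite root system of unit vectors in ℝ^N, let ρ ≥ 0, and let Ω ⊆ ℝ^N satisfy the reflection property (RP) with respect to P and ρ. Let p ∈ P, s > ρ, c > 0, and z ∈ ℝ^N with z·p > s. If the open ball B(z, c) is contained in Ω, then the open ball B(Ψ_{Π_p(s)}(z), c) is contained in Ω. -/
open scoped RealInnerProductSpace
open Metric Set MeasureTheory

noncomputable section

variable {N : ℕ}

lemma reflect_inner' (p : E N) (hpp : ⟪p, p⟫ = (1:ℝ)) (s : ℝ) (x : E N) :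
    ⟪reflect p s x, p⟫ = 2 * s - ⟪x, p⟫ := by
  rw [reflect, inner_sub_left, real_inner_smul_left, hpp]; ring

lemma reflect_invol (p : E N) (hpp : ⟪p, p⟫ = (1:ℝ)) (s : ℝ) (x : E N) :
    reflect p s (reflect p s x) = x := by
  have h := reflect_inner' p hpp s x
  rw [reflect, h, reflect]
  module

lemma norm_reflect_aux (p : E N) (hpp : ⟪p, p⟫ = (1:ℝ)) (a : E N) :
    ‖a - (2 * ⟪a, p⟫) • p‖ = ‖a‖ := by
  have h1 : ‖a - (2 * ⟪a, p⟫) • p‖ ^ 2 = ‖a‖ ^ 2 := by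
    rw [← real_inner_self_eq_norm_sq, ← real_inner_self_eq_norm_sq]
    simp only [inner_sub_left, inner_sub_right, real_inner_smul_left, real_inner_smul_right,
      hpp, real_inner_comm p a]
    ring
  nlinarith [h1, norm_nonneg (a - (2 * ⟪a, p⟫) • p), norm_nonneg a]

lemma reflect_dist (p : E N) (hpp : ⟪p, p⟫ = (1:ℝ)) (s : ℝ) (x y : E N) :
    dist (reflect p s x) (reflect p s y) = dist x y := by
  rw [dist_eq_norm, dist_eq_norm]
  have : reflect p s x - reflect p s y = (x - y) - (2 * ⟪x - y, p⟫) • p := by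
    rw [reflect, reflect, inner_sub_left]; module
  rw [this, norm_reflect_aux p hpp]

/-- the reflection of an interior ball of `Ω` is also in `Ω`. -/
theorem ball_reflection (N : ℕ) (P : Set (E N)) (hP : IsRootSystem P)
    (ρ : ℝ) (hρ : 0 ≤ ρ) (Ω : Set (E N)) (hΩ : ReflProp P ρ Ω)
    (p : E N) (hp : p ∈ P) (s : ℝ) (hs : s > ρ) (c : ℝ) (hc : 0 < c)
    (z : E N) (hz : ⟪z, p⟫ > s) (hball : ball z c ⊆ Ω) :
    ball (reflect p s z) c ⊆ Ω := by
  obtain ⟨hfin, hunit, -, -⟩ := hP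
  have hpp : ⟪p, p⟫ = (1:ℝ) := by
    rw [real_inner_self_eq_norm_sq, hunit p hp]; norm_num
  intro x hx
  rw [mem_ball] at hx
  rcases lt_or_ge ⟪x, p⟫ s with h | h
  · have hw : reflect p s x ∈ ball z c := by
      rw [mem_ball]
      calc dist (reflect p s x) z
          = dist (reflect p s x) (reflect p s (reflect p s z)) := by
            rw [reflect_invol p hpp]
        _ = dist x (reflect p s z) := reflect_dist p hpp s _ _
        _ < c := hx
    have hmem : x ∈ reflect p s '' Ω ∩ {x | ⟪x, p⟫ < s} :=
      ⟨⟨reflect p s x, hball hw, reflect_invol p hpp s x⟩, h⟩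
    exact (hΩ p hp s hs hmem).1
  · set s' := ⟪x, p⟫ + ⟪z, p⟫ - s with hs'
    have hs'ρ : s' > ρ := by linarith
    set w := z + (x - reflect p s z) with hwdef
    have hw : w ∈ ball z c := by
      rw [mem_ball, dist_eq_norm]
      have hwz : w - z = x - reflect p s z := by rw [hwdef]; abel
      rw [hwz, ← dist_eq_norm]; exact hx
    have hwx : reflect p s' w = x := by
      have hwip : ⟪w, p⟫ = ⟪z, p⟫ + (⟪x, p⟫ - (2 * s - ⟪z, p⟫)) := by
        rw [hwdef, inner_add_left, inner_sub_left, reflect_inner' p hpp]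
      rw [reflect, hwip, hs']
      have hcoef : (2 * ((⟪z, p⟫ + (⟪x, p⟫ - (2 * s - ⟪z, p⟫))) - (⟪x, p⟫ + ⟪z, p⟫ - s)))
          = 2 * (⟪z, p⟫ - s) := by ring
      rw [hcoef, hwdef, reflect]
      module
    have hmem : x ∈ reflect p s' '' Ω ∩ {x | ⟪x, p⟫ < s'} :=
      ⟨⟨w, hball hw, hwx⟩, by simp only [mem_setOf_eq]; linarith⟩
    exact (hΩ p hp s' hs'ρ hmem).1
end
end

section
/- Let P ⊆ S^{N−1} be a finite root system in ℝ^N (N ≥ 1) satisfying condition (EA), let ρ ≥ 0, and let Ω ⊆ ℝ^N satisfy the reflection property (RP) with respect to P and ρ. If the open ball B(z₀, c) is contained in Ω for some z₀ ∈ ℝ^N and some c > σ2(P)ρ, then the open ball B(0, c − σ2(P)ρ) is contained in Ω. -/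
open scoped RealInnerProductSpace
open Metric Set MeasureTheory

noncomputable section

variable {N : ℕ}

namespace BallToOriginAux

lemma inner_reflect {N : ℕ} {p : E N} (hp : ‖p‖ = 1) (s : ℝ) (x : E N) :
    ⟪reflect p s x, p⟫ = 2*s - ⟪x, p⟫ := by
  have h : ⟪p, p⟫ = (1:ℝ) := by rw [real_inner_self_eq_norm_sq, hp]; norm_num
  rw [reflect, inner_sub_left, real_inner_smul_left, h]; ring

lemma reflect_reflect {N : ℕ} {p : E N} (hp : ‖p‖ = 1) (s : ℝ) (x : E N) :
    reflect p s (reflect p s x) = x := by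
  rw [reflect, inner_reflect hp, reflect]
  module

lemma norm_sub_smul {N : ℕ} {p : E N} (hp : ‖p‖ = 1) (t : ℝ) (a : E N) :
    ‖a - t • p‖^2 = ‖a‖^2 - 2*t*⟪a,p⟫ + t^2 := by
  have h : ⟪p, p⟫ = (1:ℝ) := by rw [real_inner_self_eq_norm_sq, hp]; norm_num
  rw [← real_inner_self_eq_norm_sq, ← real_inner_self_eq_norm_sq,
    inner_sub_left, inner_sub_right, inner_sub_right, real_inner_smul_left,
    real_inner_smul_left, real_inner_smul_right, real_inner_smul_right, h, real_inner_comm a p]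
  ring

lemma reflect_dist {N : ℕ} {p : E N} (hp : ‖p‖ = 1) (s : ℝ) (x y : E N) :
    ‖reflect p s x - reflect p s y‖ = ‖x - y‖ := by
  have h1 : reflect p s x - reflect p s y = (x - y) - (2*⟪x-y,p⟫) • p := by
    rw [reflect, reflect, inner_sub_left]; module
  have h2 := norm_sub_smul hp (2*⟪x-y,p⟫) (x - y)
  rw [h1] at *
  nlinarith [norm_nonneg (x - y - (2*⟪x-y,p⟫)•p), norm_nonneg (x-y)]

lemma step_reflect {N : ℕ} {P : Set (E N)} {ρ : ℝ} {Ω : Set (E N)} (hΩ : ReflProp P ρ Ω)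
    {p : E N} (hpP : p ∈ P) (hp : ‖p‖ = 1) {z : E N} {c : ℝ}
    (hz : ball z c ⊆ Ω) (hzp : ρ < ⟪z,p⟫) :
    ball (z - (⟪z,p⟫ - ρ) • p) c ⊆ Ω := by
  set s := (⟪z,p⟫ + ρ)/2 with hs_def
  have hs : s > ρ := by rw [hs_def]; linarith
  have hz' : z - (⟪z,p⟫ - ρ) • p = reflect p s z := by
    rw [reflect]
    congr 2
    rw [hs_def]; ring
  intro x hx
  rw [mem_ball, dist_eq_norm, hz'] at hx
  by_cases hxp : ⟪x,p⟫ < s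
  · have hy : reflect p s x ∈ ball z c := by
      rw [mem_ball, dist_eq_norm]
      calc ‖reflect p s x - z‖ = ‖reflect p s x - reflect p s (reflect p s z)‖ := by
            rw [reflect_reflect hp]
        _ = ‖x - reflect p s z‖ := reflect_dist hp s x _
        _ < c := hx
    exact (hΩ p hpP s hs ⟨⟨reflect p s x, hz hy, reflect_reflect hp s x⟩, hxp⟩).1
  · push_neg at hxp
    apply hz
    rw [mem_ball, dist_eq_norm]
    set t := ⟪z,p⟫ - ρ with ht_def
    have ht : 0 < t := by rw [ht_def]; linarith
    have h1 : x - z = (x - reflect p s z) - t • p := by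
      rw [← hz']; module
    rw [h1]
    have h2 := norm_sub_smul hp t (x - reflect p s z)
    have h3 : ⟪x - reflect p s z, p⟫ = ⟪x,p⟫ - ρ := by
      rw [inner_sub_left, inner_reflect hp, hs_def]; ring
    have hxs : ρ + t/2 ≤ ⟪x,p⟫ := by rw [ht_def]; rw [hs_def] at hxp; linarith
    nlinarith [norm_nonneg (x - reflect p s z - t • p), norm_nonneg (x - reflect p s z)]

lemma eq_zero_of_inner {N : ℕ} {P : Set (E N)} (hspan : Submodule.span ℝ P = ⊤) {z : E N}
    (h : ∀ p ∈ P, ⟪p, z⟫ = 0) : z = 0 := by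
  have hz : ∀ y ∈ Submodule.span ℝ P, ⟪y, z⟫ = (0:ℝ) := by
    intro y hy
    refine Submodule.span_induction h (by simp) (fun a b _ _ ha hb => by
      rw [inner_add_left, ha, hb, add_zero]) (fun r a _ ha => by
      rw [real_inner_smul_left, ha, mul_zero]) hy
  have := hz z (by rw [hspan]; trivial)
  exact inner_self_eq_zero.mp this

end BallToOriginAux

open BallToOriginAux in

/-- an interior ball can be moved to the origin. -/
theorem ball_to_origin (N : ℕ) (hN : 1 ≤ N) (P : Set (E N))
    (hP : IsRootSystem P) (hEA : CondEA P) (ρ : ℝ) (hρ : 0 ≤ ρ)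
    (Ω : Set (E N)) (hΩ : ReflProp P ρ Ω) (z₀ : E N) (c : ℝ)
    (hc : c > sigma2 P * ρ) (hball : ball z₀ c ⊆ Ω) :
    ball (0 : E N) (c - sigma2 P * ρ) ⊆ Ω := by

  obtain ⟨hPfin, hPnorm, hPpm, -⟩ := hP
  -- the span of P is everything
  have hsingle : (EuclideanSpace.single (⟨0, hN⟩ : Fin N) (1:ℝ)) ≠ 0 := by
    intro h
    have := congrArg norm h
    rw [EuclideanSpace.norm_single] at this
    simp at this
  have hspan : Submodule.span ℝ P = ⊤ := by
    rw [eq_top_iff, ← hEA _ hsingle]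
    exact Submodule.span_mono fun p hp => hp.1
  -- -p ∈ P for p ∈ P
  have hneg : ∀ p ∈ P, -p ∈ P := by
    intro p hp
    have h2 : -p ∈ {q | q ∈ P ∧ ∃ c : ℝ, q = c • p} := by
      rw [hPpm p hp]; right; rfl
    exact h2.1
  -- a reverse comparison constant : m * ‖x‖ ≤ ∑_{p ∈ P} |⟪p,x⟫|
  set F := hPfin.toFinset with hF
  set g : E N → ℝ := fun x => ∑ p ∈ F, |⟪p, x⟫| with hg
  have hgcont : Continuous g := continuous_finset_sum _ fun p _ => ((innerSL ℝ p).continuous).abs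
  have hsphne : (sphere (0:E N) 1).Nonempty := ⟨EuclideanSpace.single ⟨0,hN⟩ 1, by
    rw [mem_sphere_zero_iff_norm, EuclideanSpace.norm_single]; norm_num⟩
  obtain ⟨x₀, hx₀, hx₀min⟩ :=
    (isCompact_sphere (0:E N) 1).exists_isMinOn hsphne hgcont.continuousOn
  set m := g x₀ with hm_def
  have hx₀n : ‖x₀‖ = 1 := mem_sphere_zero_iff_norm.mp hx₀
  have hm0 : 0 ≤ m := Finset.sum_nonneg fun p _ => abs_nonneg _
  have hm : 0 < m := by
    rcases lt_or_eq_of_le hm0 with h | h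
    · exact h
    · exfalso
      have hzero : ∀ p ∈ P, ⟪p, x₀⟫ = (0:ℝ) := by
        intro p hp
        have hmem : p ∈ F := hPfin.mem_toFinset.mpr hp
        exact abs_eq_zero.mp
          ((Finset.sum_eq_zero_iff_of_nonneg (fun q _ => abs_nonneg _)).mp h.symm p hmem)
      have hzz : x₀ = 0 := eq_zero_of_inner hspan hzero
      rw [hzz] at hx₀n
      simp at hx₀n
  have hglb : ∀ x : E N, m * ‖x‖ ≤ g x := by
    intro x
    rcases eq_or_ne x 0 with rfl | hx
    · simp [hg]
    · have hxn : ‖x‖ ≠ 0 := norm_ne_zero_iff.mpr hx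
      have hu : ‖x‖⁻¹ • x ∈ sphere (0:E N) 1 := by
        rw [mem_sphere_zero_iff_norm, norm_smul, norm_inv, norm_norm, inv_mul_cancel₀ hxn]
      have h1 : m ≤ g (‖x‖⁻¹ • x) := hx₀min hu
      have h2 : g x = ‖x‖ * g (‖x‖⁻¹ • x) := by
        rw [hg]
        simp only
        rw [Finset.mul_sum]
        refine Finset.sum_congr rfl fun p _ => ?_
        rw [real_inner_smul_right, abs_mul, abs_inv, abs_norm, ← mul_assoc,
          mul_inv_cancel₀ hxn, one_mul]
      have h3 : m * ‖x‖ ≤ g (‖x‖⁻¹ • x) * ‖x‖ :=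
        mul_le_mul_of_nonneg_right h1 (norm_nonneg x)
      rw [h2]; linarith
  -- bound the sigma2 defining set
  have hbdd : ∀ x : E N, (∀ p ∈ P, |⟪p,x⟫| ≤ 1) → ‖x‖ ≤ (F.card : ℝ) / m := by
    intro x hx
    have h1 : g x ≤ (F.card : ℝ) := by
      rw [hg]
      simp only
      calc ∑ p ∈ F, |⟪p,x⟫| ≤ ∑ _p ∈ F, (1:ℝ) :=
            Finset.sum_le_sum fun p hp => hx p (hPfin.mem_toFinset.mp hp)
        _ = (F.card : ℝ) := by simp
    rw [le_div_iff₀ hm]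
    have := hglb x
    linarith
  have hbddA : BddAbove {t | ∃ x : E N, (∀ p ∈ P, |⟪p, x⟫| ≤ 1) ∧ t = ‖x‖} := by
    refine ⟨(F.card : ℝ) / m, ?_⟩
    rintro t ⟨x, hx, rfl⟩
    exact hbdd x hx
  -- the set of admissible centers
  set Z : Set (E N) := {z | ball z c ⊆ Ω} with hZdef
  have hz₀Z : z₀ ∈ Z := hball
  have hZclosed : IsClosed Z := by
    have hZeq : Z = ⋂ x ∈ Ωᶜ, {z : E N | c ≤ dist x z} := by
      ext z
      simp only [hZdef, mem_setOf_eq, mem_iInter, mem_compl_iff]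
      constructor
      · intro hz x hx
        by_contra h
        push_neg at h
        exact hx (hz (mem_ball.mpr h))
      · intro h x hx
        by_contra hxΩ
        exact absurd (h x hxΩ) (not_le.mpr (mem_ball.mp hx))
    rw [hZeq]
    exact isClosed_biInter fun x _ =>
      isClosed_le continuous_const (continuous_const.dist continuous_id)
  set K : Set (E N) := Z ∩ closedBall 0 ‖z₀‖ with hKdef
  have hKco : IsCompact K := (isCompact_closedBall (0:E N) ‖z₀‖).inter_left hZclosed
  have hKne : K.Nonempty := ⟨z₀, hz₀Z, by rw [mem_closedBall_zero_iff]⟩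
  obtain ⟨z, hzK, hzmin'⟩ := hKco.exists_isMinOn hKne continuous_norm.continuousOn
  have hzmin : ∀ y ∈ K, ‖z‖ ≤ ‖y‖ := fun y hy => hzmin' hy
  -- the minimizer satisfies ⟪z,p⟫ ≤ ρ for all p ∈ P
  have hsmall : ∀ p ∈ P, ⟪z,p⟫ ≤ ρ := by
    by_contra h
    push_neg at h
    obtain ⟨p, hpP, hzp⟩ := h
    have hpn : ‖p‖ = 1 := hPnorm p hpP
    have hz' : ball (z - (⟪z,p⟫ - ρ) • p) c ⊆ Ω := step_reflect hΩ hpP hpn hzK.1 hzp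
    have hn := norm_sub_smul hpn (⟪z,p⟫ - ρ) z
    have hlt : ‖z - (⟪z,p⟫ - ρ) • p‖ < ‖z‖ := by
      nlinarith [norm_nonneg (z - (⟪z,p⟫ - ρ) • p), norm_nonneg z]
    have hzn : ‖z‖ ≤ ‖z₀‖ := mem_closedBall_zero_iff.mp hzK.2
    have hmem : z - (⟪z,p⟫ - ρ) • p ∈ K :=
      ⟨hz', mem_closedBall_zero_iff.mpr (by linarith)⟩
    exact absurd (hzmin _ hmem) (not_le.mpr hlt)
  have habs : ∀ p ∈ P, |⟪p,z⟫| ≤ ρ := by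
    intro p hp
    rw [abs_le]
    constructor
    · have := hsmall (-p) (hneg p hp)
      rw [inner_neg_right] at this
      rw [real_inner_comm]
      linarith
    · rw [real_inner_comm]
      exact hsmall p hp
  -- ‖z‖ ≤ sigma2 P * ρ
  have hznorm : ‖z‖ ≤ sigma2 P * ρ := by
    rcases eq_or_lt_of_le hρ with h0 | h0
    · have hz0 : z = 0 := by
        refine eq_zero_of_inner hspan fun p hp => ?_
        have := habs p hp
        rw [← h0] at this
        exact abs_eq_zero.mp (le_antisymm this (abs_nonneg _))
      rw [hz0, ← h0]
      simp
    · have hx : ∀ p ∈ P, |⟪p, ρ⁻¹ • z⟫| ≤ 1 := by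
        intro p hp
        rw [real_inner_smul_right, abs_mul, abs_inv, abs_of_pos h0]
        rw [inv_mul_le_iff₀ h0, mul_one]
        exact habs p hp
      have h1 : ‖ρ⁻¹ • z‖ ≤ sigma2 P := le_csSup hbddA ⟨_, hx, rfl⟩
      rw [norm_smul, norm_inv, Real.norm_eq_abs, abs_of_pos h0] at h1
      rw [inv_mul_le_iff₀ h0] at h1
      linarith [h1]
  -- conclude
  intro x hx
  apply hzK.1
  rw [mem_ball] at hx ⊢
  have h1 : dist x z ≤ dist x 0 + dist 0 z := dist_triangle x 0 z
  have h2 : dist (0:E N) z = ‖z‖ := by rw [dist_eq_norm]; simp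
  rw [h2] at h1
  linarith
end
end
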